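/- arXiv:math/0503013 — 2 statements merged into one kernel-verified Lean document; each statement's English description precedes it below -/
import Mathlib

section
/- Let (Ω, F, P) be a standard Borel probability space, 𝒜 ⊆ F a sub-σ-algebra, X an ℝ^d-valued 𝒜-measurable random variable, and Y an ℝ^d-valued random variable independent of 𝒜 whose law is absolutely continuous with respect to Lebesgue measure with finite differential entropy h(Y). Assume the (automatically absolutely continuous) law of X + Y has well-defined differential entropy h(X + Y). Then the mutual information between G := X + Y and 𝒜 satisfies I(G, 𝒜) = h(X + Y) − h(Y). (Lemma 6.1.) -/
open MeasureTheory ProbabilityTheory Real Filter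
open scoped ENNReal NNReal

open Classical in
/-- Relative entropy (Kullback–Leibler divergence) of `R` with respect to `Q`,
as an extended real number: `∫ log (dR/dQ) dR` if `R ≪ Q`, and `⊤` otherwise. -/
noncomputable def klDiv {α : Type*} [MeasurableSpace α] (R Q : Measure α) : EReal :=
  if R ≪ Q then
    ((lintegral R (fun x => ENNReal.ofReal (Real.log ((R.rnDeriv Q x).toReal))) : ℝ≥0∞) : EReal)
      - ((lintegral R (fun x => ENNReal.ofReal (-Real.log ((R.rnDeriv Q x).toReal))) : ℝ≥0∞) : EReal)
  else ⊤

/-- Positive part of the differential entropy `-∫ f log f dlam` of `μ` with density `f`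
w.r.t. `lam`. -/
noncomputable def entPos {α : Type*} [MeasurableSpace α] (μ lam : Measure α) : ℝ≥0∞ :=
  ∫⁻ x, ENNReal.ofReal (-((μ.rnDeriv lam x).toReal * Real.log ((μ.rnDeriv lam x).toReal))) ∂lam

/-- Negative part of the differential entropy. -/
noncomputable def entNeg {α : Type*} [MeasurableSpace α] (μ lam : Measure α) : ℝ≥0∞ :=
  ∫⁻ x, ENNReal.ofReal ((μ.rnDeriv lam x).toReal * Real.log ((μ.rnDeriv lam x).toReal)) ∂lam

/-- Differential entropy `h(μ) = -∫ f log f dlam` as an extended real number. -/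
noncomputable def diffEntropy {α : Type*} [MeasurableSpace α] (μ lam : Measure α) : EReal :=
  ((entPos μ lam : ℝ≥0∞) : EReal) - ((entNeg μ lam : ℝ≥0∞) : EReal)

/-- The differential entropy is well defined (not `∞ - ∞`). -/
def HasDiffEntropy {α : Type*} [MeasurableSpace α] (μ lam : Measure α) : Prop :=
  entPos μ lam ≠ ⊤ ∨ entNeg μ lam ≠ ⊤

/-- The differential entropy is finite. -/
def HasFiniteDiffEntropy {α : Type*} [MeasurableSpace α] (μ lam : Measure α) : Prop :=
  entPos μ lam ≠ ⊤ ∧ entNeg μ lam ≠ ⊤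

/-- Mutual information between two random variables. -/
noncomputable def mutualInfoFun {Ω E₁ E₂ : Type*} [MeasurableSpace Ω] [MeasurableSpace E₁]
    [MeasurableSpace E₂] (P : Measure Ω) (U : Ω → E₁) (V : Ω → E₂) : EReal :=
  klDiv (Measure.map (fun ω => (U ω, V ω)) P) ((Measure.map U P).prod (Measure.map V P))

/-- Mutual information between a random variable `Z` and a sub-σ-algebra `𝒜`: the relative
entropy of the law of `ω ↦ (Z ω, ω)` on `E × (Ω, 𝒜)` with respect to the product of the law
of `Z` and the restriction of `P` to `𝒜`. -/
noncomputable def mutualInfoSigma {Ω E : Type*} [F : MeasurableSpace Ω] [mE : MeasurableSpace E]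
    (P : Measure Ω) (Z : Ω → E) (𝒜 : MeasurableSpace Ω) : EReal :=
  @klDiv (E × Ω) (mE.prod 𝒜)
    (@Measure.map Ω (E × Ω) F (mE.prod 𝒜) (fun ω => (Z ω, ω)) P)
    (@Measure.prod E Ω mE 𝒜 (@Measure.map Ω E F mE Z P) (@Measure.map Ω Ω F 𝒜 id P))

/-- Covariance matrix of an `ℝ^d`-valued random variable. -/
noncomputable def covMatrix {Ω : Type*} [MeasurableSpace Ω] {d : ℕ}
    (P : Measure Ω) (X : Ω → (Fin d → ℝ)) : Matrix (Fin d) (Fin d) ℝ :=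
  fun i j => ∫ ω, (X ω i - ∫ ω', X ω' i ∂P) * (X ω j - ∫ ω', X ω' j ∂P) ∂P

/-- `Y` is a centered Gaussian random vector with covariance matrix `C`. -/
def IsCenteredGaussianRV {Ω : Type*} [MeasurableSpace Ω] {d : ℕ}
    (P : Measure Ω) (Y : Ω → (Fin d → ℝ)) (C : Matrix (Fin d) (Fin d) ℝ) : Prop :=
  ∀ l : Fin d → ℝ, Measure.map (fun ω => ∑ i, l i * Y ω i) P
    = gaussianReal 0 (Real.toNNReal (dotProduct l (C.mulVec l)))

/-- `X` is a (not necessarily centered) Gaussian random vector. -/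
def IsGaussianRV {Ω : Type*} [MeasurableSpace Ω] {d : ℕ}
    (P : Measure Ω) (X : Ω → (Fin d → ℝ)) : Prop :=
  ∀ l : Fin d → ℝ, Measure.map (fun ω => ∑ i, l i * X ω i) P
    = gaussianReal (∫ ω, ∑ i, l i * X ω i ∂P)
        (Real.toNNReal (dotProduct l ((covMatrix P X).mulVec l)))


lemma ofReal_toReal_mul (t : ℝ≥0∞) (ht : t ≠ ⊤) (r : ℝ) :
    ENNReal.ofReal (t.toReal * r) = t * ENNReal.ofReal r := by
  rcases le_or_gt r 0 with h | h
  · rw [ENNReal.ofReal_eq_zero.mpr (mul_nonpos_of_nonneg_of_nonpos ENNReal.toReal_nonneg h),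
      ENNReal.ofReal_eq_zero.mpr h, mul_zero]
  · rw [ENNReal.ofReal_mul ENNReal.toReal_nonneg, ENNReal.ofReal_toReal ht]

lemma coe_ennreal_eq (x : ℝ≥0∞) (hx : x ≠ ⊤) : ((x : EReal)) = ((x.toReal : ℝ) : EReal) := by
  rw [← EReal.toReal_coe_ennreal (x := x)]
  refine (EReal.coe_toReal ?_ ?_).symm
  · simpa using hx
  · exact ne_of_gt (lt_of_lt_of_le EReal.bot_lt_zero (by simp [EReal.coe_ennreal_nonneg]))

lemma ofReal_tri (a b : ℝ) :
    ENNReal.ofReal (b - a) + ENNReal.ofReal a + ENNReal.ofReal (-b)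
      = ENNReal.ofReal (a - b) + ENNReal.ofReal (-a) + ENNReal.ofReal b := by
  have key : ∀ x : ℝ, max x 0 = (x + |x|) / 2 := by
    intro x
    rcases le_total 0 x with h | h
    · rw [abs_of_nonneg h, max_eq_left h]; ring
    · rw [abs_of_nonpos h, max_eq_right h]; ring
  have h : ∀ x : ℝ, ENNReal.ofReal x = ((Real.toNNReal x : ℝ≥0) : ℝ≥0∞) := fun _ => rfl
  rw [h, h, h, h, h, h, ← ENNReal.coe_add, ← ENNReal.coe_add, ← ENNReal.coe_add,
    ← ENNReal.coe_add, ENNReal.coe_inj]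
  apply NNReal.coe_injective
  push_cast [Real.coe_toNNReal']
  rw [key, key, key, key, key, key, abs_sub_comm b a, abs_neg, abs_neg]
  ring

lemma lintegral_sub_ereal {Ω : Type*} [MeasurableSpace Ω] (P : Measure Ω)
    {A B : Ω → ℝ} (hA : Measurable A) (hB : Measurable B)
    (hBp : ∫⁻ ω, ENNReal.ofReal (B ω) ∂P ≠ ⊤)
    (hBm : ∫⁻ ω, ENNReal.ofReal (-B ω) ∂P ≠ ⊤)
    (hAor : (∫⁻ ω, ENNReal.ofReal (-A ω) ∂P ≠ ⊤) ∨ (∫⁻ ω, ENNReal.ofReal (A ω) ∂P ≠ ⊤)) :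
    ((∫⁻ ω, ENNReal.ofReal (B ω - A ω) ∂P : ℝ≥0∞) : EReal)
        - ((∫⁻ ω, ENNReal.ofReal (A ω - B ω) ∂P : ℝ≥0∞) : EReal)
      = (((∫⁻ ω, ENNReal.ofReal (-A ω) ∂P : ℝ≥0∞) : EReal)
          - ((∫⁻ ω, ENNReal.ofReal (A ω) ∂P : ℝ≥0∞) : EReal))
        - (((∫⁻ ω, ENNReal.ofReal (-B ω) ∂P : ℝ≥0∞) : EReal)
          - ((∫⁻ ω, ENNReal.ofReal (B ω) ∂P : ℝ≥0∞) : EReal)) := by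
  have mA : Measurable fun ω => ENNReal.ofReal (A ω) := ENNReal.measurable_ofReal.comp hA
  have mAm : Measurable fun ω => ENNReal.ofReal (-A ω) := ENNReal.measurable_ofReal.comp hA.neg
  have mB : Measurable fun ω => ENNReal.ofReal (B ω) := ENNReal.measurable_ofReal.comp hB
  have mBm : Measurable fun ω => ENNReal.ofReal (-B ω) := ENNReal.measurable_ofReal.comp hB.neg
  have mU : Measurable fun ω => ENNReal.ofReal (B ω - A ω) :=
    ENNReal.measurable_ofReal.comp (hB.sub hA)
  have mUm : Measurable fun ω => ENNReal.ofReal (A ω - B ω) :=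
    ENNReal.measurable_ofReal.comp (hA.sub hB)
  set Up := ∫⁻ ω, ENNReal.ofReal (B ω - A ω) ∂P with hUp_def
  set Um := ∫⁻ ω, ENNReal.ofReal (A ω - B ω) ∂P with hUm_def
  set Ap := ∫⁻ ω, ENNReal.ofReal (A ω) ∂P with hAp_def
  set Am := ∫⁻ ω, ENNReal.ofReal (-A ω) ∂P with hAm_def
  set Bp := ∫⁻ ω, ENNReal.ofReal (B ω) ∂P with hBp_def
  set Bm := ∫⁻ ω, ENNReal.ofReal (-B ω) ∂P with hBm_def
  have hstar : Up + Ap + Bm = Um + Am + Bp := by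
    have h1 : ∫⁻ ω, (ENNReal.ofReal (B ω - A ω) + ENNReal.ofReal (A ω)
        + ENNReal.ofReal (-B ω)) ∂P
        = ∫⁻ ω, (ENNReal.ofReal (A ω - B ω) + ENNReal.ofReal (-A ω)
          + ENNReal.ofReal (B ω)) ∂P :=
      lintegral_congr fun ω => ofReal_tri (A ω) (B ω)
    rwa [lintegral_add_right _ mBm, lintegral_add_right _ mA,
      lintegral_add_right _ mB, lintegral_add_right _ mAm] at h1
  have hUp_le : Up ≤ Bp + Am := by
    rw [hUp_def, ← lintegral_add_left' mB.aemeasurable]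
    refine lintegral_mono fun ω => ?_
    calc ENNReal.ofReal (B ω - A ω) = ENNReal.ofReal (B ω + -A ω) := by ring_nf
    _ ≤ _ := ENNReal.ofReal_add_le
  have hUm_le : Um ≤ Bm + Ap := by
    rw [hUm_def, ← lintegral_add_left' mBm.aemeasurable]
    refine lintegral_mono fun ω => ?_
    calc ENNReal.ofReal (A ω - B ω) = ENNReal.ofReal (-B ω + A ω) := by ring_nf
    _ ≤ _ := ENNReal.ofReal_add_le
  by_cases hAp : Ap = ⊤
  · have hAm : Am ≠ ⊤ := by
      rcases hAor with h | h
      · exact h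
      · exact absurd hAp h
    have hUp : Up ≠ ⊤ := ne_top_of_le_ne_top (ENNReal.add_ne_top.mpr ⟨hBp, hAm⟩) hUp_le
    have hUm : Um = ⊤ := by
      by_contra hUm
      exact (ENNReal.add_ne_top.mpr ⟨ENNReal.add_ne_top.mpr ⟨hUm, hAm⟩, hBp⟩)
        (by rw [← hstar]; simp [hAp])
    rw [hUm, hAp, EReal.coe_ennreal_top, EReal.sub_top,
      coe_ennreal_eq Am hAm, coe_ennreal_eq Bm hBm, coe_ennreal_eq Bp hBp,
      ← EReal.coe_sub, EReal.sub_top, EReal.bot_sub]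
  · by_cases hAm : Am = ⊤
    · have hUm2 : Um ≠ ⊤ := ne_top_of_le_ne_top (ENNReal.add_ne_top.mpr ⟨hBm, hAp⟩) hUm_le
      have hUp2 : Up = ⊤ := by
        by_contra hUp
        exact (ENNReal.add_ne_top.mpr ⟨ENNReal.add_ne_top.mpr ⟨hUp, hAp⟩, hBm⟩)
          (by rw [hstar]; simp [hAm])
      rw [hUp2, hAm, EReal.coe_ennreal_top,
        coe_ennreal_eq Um hUm2, coe_ennreal_eq Ap hAp, coe_ennreal_eq Bm hBm,
        coe_ennreal_eq Bp hBp, ← EReal.coe_sub, EReal.top_sub_coe, EReal.top_sub_coe,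
        EReal.top_sub_coe]
    · have hUp : Up ≠ ⊤ := ne_top_of_le_ne_top (ENNReal.add_ne_top.mpr ⟨hBp, hAm⟩) hUp_le
      have hUm : Um ≠ ⊤ := ne_top_of_le_ne_top (ENNReal.add_ne_top.mpr ⟨hBm, hAp⟩) hUm_le
      have hreal : Up.toReal + Ap.toReal + Bm.toReal = Um.toReal + Am.toReal + Bp.toReal := by
        have := congrArg ENNReal.toReal hstar
        rwa [ENNReal.toReal_add (ENNReal.add_ne_top.mpr ⟨hUp, hAp⟩) hBm,
          ENNReal.toReal_add hUp hAp,
          ENNReal.toReal_add (ENNReal.add_ne_top.mpr ⟨hUm, hAm⟩) hBp,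
          ENNReal.toReal_add hUm hAm] at this
      rw [coe_ennreal_eq Up hUp, coe_ennreal_eq Um hUm, coe_ennreal_eq Ap hAp,
        coe_ennreal_eq Am hAm, coe_ennreal_eq Bp hBp, coe_ennreal_eq Bm hBm,
        ← EReal.coe_sub, ← EReal.coe_sub, ← EReal.coe_sub, ← EReal.coe_sub]
      exact congrArg _ (by linarith)

lemma entNeg_eq_lintegral {α : Type*} [MeasurableSpace α] (μ lam : Measure α)
    [IsFiniteMeasure μ] [SigmaFinite lam] (h : μ ≪ lam) :
    entNeg μ lam = ∫⁻ x, ENNReal.ofReal (Real.log ((μ.rnDeriv lam x).toReal)) ∂μ := by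
  have hf : Measurable (μ.rnDeriv lam) := Measure.measurable_rnDeriv _ _
  have hmeas : Measurable fun x => ENNReal.ofReal (Real.log ((μ.rnDeriv lam x).toReal)) :=
    ENNReal.measurable_ofReal.comp (Real.measurable_log.comp hf.ennreal_toReal)
  have hrw : ∫⁻ x, ENNReal.ofReal (Real.log ((μ.rnDeriv lam x).toReal)) ∂μ
      = ∫⁻ x, ENNReal.ofReal (Real.log ((μ.rnDeriv lam x).toReal))
        ∂(lam.withDensity (μ.rnDeriv lam)) := by
    rw [Measure.withDensity_rnDeriv_eq μ lam h]
  rw [hrw, lintegral_withDensity_eq_lintegral_mul lam hf hmeas, entNeg]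
  refine lintegral_congr_ae ?_
  filter_upwards [Measure.rnDeriv_ne_top μ lam] with x hx
  exact ofReal_toReal_mul _ hx _

lemma entPos_eq_lintegral {α : Type*} [MeasurableSpace α] (μ lam : Measure α)
    [IsFiniteMeasure μ] [SigmaFinite lam] (h : μ ≪ lam) :
    entPos μ lam = ∫⁻ x, ENNReal.ofReal (-Real.log ((μ.rnDeriv lam x).toReal)) ∂μ := by
  have hf : Measurable (μ.rnDeriv lam) := Measure.measurable_rnDeriv _ _
  have hmeas : Measurable fun x => ENNReal.ofReal (-Real.log ((μ.rnDeriv lam x).toReal)) :=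
    ENNReal.measurable_ofReal.comp (Real.measurable_log.comp hf.ennreal_toReal).neg
  have hrw : ∫⁻ x, ENNReal.ofReal (-Real.log ((μ.rnDeriv lam x).toReal)) ∂μ
      = ∫⁻ x, ENNReal.ofReal (-Real.log ((μ.rnDeriv lam x).toReal))
        ∂(lam.withDensity (μ.rnDeriv lam)) := by
    rw [Measure.withDensity_rnDeriv_eq μ lam h]
  rw [hrw, lintegral_withDensity_eq_lintegral_mul lam hf hmeas, entPos]
  refine lintegral_congr_ae ?_
  filter_upwards [Measure.rnDeriv_ne_top μ lam] with x hx
  have h2 := ofReal_toReal_mul ((μ.rnDeriv lam) x) hx (-Real.log ((μ.rnDeriv lam x).toReal))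
  rw [mul_neg] at h2
  exact h2

lemma prod_withDensity_left {α β : Type*} [MeasurableSpace α] [MeasurableSpace β]
    (ν : Measure α) [SigmaFinite ν] (μπ : Measure β) [SigmaFinite μπ] {g : α → ℝ≥0∞}
    (hg : Measurable g) [SigmaFinite (ν.withDensity g)] :
    (ν.withDensity g).prod μπ = (ν.prod μπ).withDensity (fun p => g p.1) := by
  refine Measure.prod_eq (μ := ν.withDensity g) (ν := μπ) fun s t hs ht => ?_
  rw [withDensity_apply _ (hs.prod ht), ← Measure.prod_restrict,
    lintegral_prod (f := fun a : _ × _ => g a.1)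
    ((hg.comp measurable_fst : Measurable fun a : _ × _ => g a.1)).aemeasurable]
  simp only [lintegral_const, Measure.restrict_apply MeasurableSet.univ, Set.univ_inter]
  rw [lintegral_mul_const _ hg, withDensity_apply _ hs]

section Aux
variable {Ω Ω' : Type*} {d : ℕ} [mΩ : MeasurableSpace Ω] [mΩ' : MeasurableSpace Ω']
  (P : Measure Ω) [IsProbabilityMeasure P] (pr : Ω → Ω') (hpr : Measurable pr)
  (X : Ω' → (Fin d → ℝ)) (hX : Measurable X) (Y : Ω → (Fin d → ℝ)) (hY : Measurable Y)

-- abbreviations as local notations are hard; just do the steps as lemmas with all hypotheses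

lemma key_translate (hYac : Measure.map Y P ≪ volume) (c : Fin d → ℝ)
    (A : Set (Fin d → ℝ)) (hA : MeasurableSet A) :
    Measure.map Y P ((fun y => c + y) ⁻¹' A)
      = ∫⁻ z in A, (Measure.map Y P).rnDeriv volume (z - c) ∂volume := by
  set ν : Measure (Fin d → ℝ) := volume
  set f := (Measure.map Y P).rnDeriv ν with hf_def
  have hf : Measurable f := Measure.measurable_rnDeriv _ _
  have hApre : MeasurableSet ((fun y => c + y) ⁻¹' A) := hA.preimage (measurable_const_add c)
  have h1 : Measure.map Y P ((fun y => c + y) ⁻¹' A)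
      = ∫⁻ y in (fun y => c + y) ⁻¹' A, f y ∂ν := by
    conv_lhs => rw [← Measure.withDensity_rnDeriv_eq (Measure.map Y P) ν hYac]
    rw [withDensity_apply _ hApre]
  rw [h1]
  have hmp : MeasurePreserving (fun y : Fin d → ℝ => y + c) ν ν :=
    measurePreserving_add_right ν c
  have hm : Measurable fun z : Fin d → ℝ => f (z - c) :=
    hf.comp (measurable_id.sub measurable_const)
  have h2 := hmp.setLIntegral_comp_preimage hA hm
  simp only [add_sub_cancel_right] at h2
  have hset : (fun y => c + y) ⁻¹' A = (fun y : Fin d → ℝ => y + c) ⁻¹' A := by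
    ext y; simp [add_comm]
  rw [hset]
  exact h2

end Aux

theorem aux_main {Ω Ω' : Type*} {d : ℕ} [mΩ : MeasurableSpace Ω] [mΩ' : MeasurableSpace Ω']
    (P : Measure Ω) [IsProbabilityMeasure P] (pr : Ω → Ω') (hpr : Measurable pr)
    (X : Ω' → (Fin d → ℝ)) (hX : Measurable X) (Y : Ω → (Fin d → ℝ)) (hY : Measurable Y)
    (G : Ω → (Fin d → ℝ)) (hsum : ∀ ω, G ω = X (pr ω) + Y ω)
    (hindep : Indep (MeasurableSpace.comap Y inferInstance) (MeasurableSpace.comap pr mΩ') P)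
    (hYac : Measure.map Y P ≪ volume)
    (hYent : HasFiniteDiffEntropy (Measure.map Y P) volume)
    (hXYent : HasDiffEntropy (Measure.map G P) volume) :
    klDiv (Measure.map (fun ω => (G ω, pr ω)) P)
        ((Measure.map G P).prod (Measure.map pr P))
      = diffEntropy (Measure.map G P) volume - diffEntropy (Measure.map Y P) volume := by
  have hGeq : G = fun ω => X (pr ω) + Y ω := funext hsum
  have hGm : Measurable G := hGeq ▸ ((hX.comp hpr).add hY)
  set ν : Measure (Fin d → ℝ) := volume with hν_def
  set μY := Measure.map Y P with hμY_def
  set μG := Measure.map G P with hμG_def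
  set μpr := Measure.map pr P with hμpr_def
  have hΦ : Measurable (fun ω => (G ω, pr ω)) := hGm.prodMk hpr
  set R := Measure.map (fun ω => (G ω, pr ω)) P with hR_def
  set Q := μG.prod μpr with hQ_def
  haveI : IsProbabilityMeasure μY := Measure.isProbabilityMeasure_map hY.aemeasurable
  haveI : IsProbabilityMeasure μG := Measure.isProbabilityMeasure_map hGm.aemeasurable
  haveI : IsProbabilityMeasure μpr := Measure.isProbabilityMeasure_map hpr.aemeasurable
  haveI : IsProbabilityMeasure R := Measure.isProbabilityMeasure_map hΦ.aemeasurable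
  haveI : IsProbabilityMeasure Q := by rw [hQ_def]; infer_instance
  set f := μY.rnDeriv ν with hf_def
  have hfm : Measurable f := Measure.measurable_rnDeriv _ _
  set F₀ : (Fin d → ℝ) × Ω' → ℝ≥0∞ := fun p => f (p.1 - X p.2) with hF₀_def
  have hF₀m : Measurable F₀ := hfm.comp (measurable_fst.sub (hX.comp measurable_snd))
  -- joint law of (Y, pr)
  have hjoint : Measure.map (fun ω => (Y ω, pr ω)) P = μY.prod μpr :=
    (indepFun_iff_map_prod_eq_prod_map_map hY.aemeasurable hpr.aemeasurable).mp
      ((IndepFun_iff_Indep Y pr P).mpr hindep)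
  have hT : Measurable (fun p : (Fin d → ℝ) × Ω' => (X p.2 + p.1, p.2)) :=
    ((hX.comp measurable_snd).add measurable_fst).prodMk measurable_snd
  have hRmap : R = Measure.map (fun p : (Fin d → ℝ) × Ω' => (X p.2 + p.1, p.2))
      (μY.prod μpr) := by
    rw [hR_def, ← hjoint, Measure.map_map hT (hY.prodMk hpr)]
    congr 1
    funext ω
    simp [Function.comp, hsum ω]
  -- rectangle formula
  have hrect : ∀ A B, MeasurableSet A → MeasurableSet B →
      R (A ×ˢ B) = ((ν.prod μpr).withDensity F₀) (A ×ˢ B) := by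
    intro A B hA hB
    rw [hRmap, Measure.map_apply hT (hA.prod hB),
      Measure.prod_apply_symm (hT (hA.prod hB))]
    have hslice : ∀ ω' : Ω',
        μY ((fun y => (y, ω')) ⁻¹' ((fun p : (Fin d → ℝ) × Ω' =>
            (X p.2 + p.1, p.2)) ⁻¹' (A ×ˢ B)))
          = B.indicator (fun ω' => ∫⁻ z in A, f (z - X ω') ∂ν) ω' := by
      intro ω'
      by_cases hω : ω' ∈ B
      · rw [Set.indicator_of_mem hω]
        have hsets : ((fun y => (y, ω')) ⁻¹' ((fun p : (Fin d → ℝ) × Ω' =>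
            (X p.2 + p.1, p.2)) ⁻¹' (A ×ˢ B))) = (fun y => X ω' + y) ⁻¹' A := by
          ext y; simp [hω]
        rw [hsets]
        exact key_translate P Y hYac (X ω') A hA
      · rw [Set.indicator_of_notMem hω]
        convert measure_empty (μ := μY)
        ext y; simp [hω]
    rw [lintegral_congr hslice, lintegral_indicator hB,
      withDensity_apply _ (hA.prod hB), ← Measure.prod_restrict,
      lintegral_prod_symm _ hF₀m.aemeasurable]
  -- μG as withDensity
  set gbar : (Fin d → ℝ) → ℝ≥0∞ := fun z => ∫⁻ ω', F₀ (z, ω') ∂μpr with hgbar_def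
  have hgbarm : Measurable gbar := hF₀m.lintegral_prod_right'
  have hμG_eq : μG = ν.withDensity gbar := by
    refine Measure.ext fun A hA => ?_
    have h1 : μG A = R (A ×ˢ Set.univ) := by
      rw [hμG_def, Measure.map_apply hGm hA, hR_def,
        Measure.map_apply hΦ (hA.prod MeasurableSet.univ)]
      congr 1
      ext ω; simp
    rw [h1, hrect A Set.univ hA MeasurableSet.univ,
      withDensity_apply _ (hA.prod MeasurableSet.univ), ← Measure.prod_restrict,
      Measure.restrict_univ, lintegral_prod _ hF₀m.aemeasurable, withDensity_apply _ hA]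
  have hGac : μG ≪ ν := by
    rw [hμG_eq]; exact withDensity_absolutelyContinuous _ _
  set g := μG.rnDeriv ν with hg_def
  have hgm : Measurable g := Measure.measurable_rnDeriv _ _
  have hg_ae : g =ᵐ[ν] gbar := by
    rw [hg_def, hμG_eq]
    exact Measure.rnDeriv_withDensity ν hgbarm
  have hwd : ν.withDensity g = μG := Measure.withDensity_rnDeriv_eq μG ν hGac
  haveI : SigmaFinite (ν.withDensity g) := by rw [hwd]; infer_instance
  have hQ_eq : Q = (ν.prod μpr).withDensity (fun p => g p.1) := by
    rw [hQ_def, ← hwd]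
    exact prod_withDensity_left ν μpr hgm
  -- density vanishing where g = 0
  have hnull : ∀ᵐ p ∂(ν.prod μpr), g p.1 = 0 → F₀ p = 0 := by
    have hAset : MeasurableSet {z : Fin d → ℝ | g z = 0} := hgm (measurableSet_singleton 0)
    have hS : MeasurableSet ({z : Fin d → ℝ | g z = 0} ×ˢ (Set.univ : Set Ω')) :=
      hAset.prod MeasurableSet.univ
    have hint : ∫⁻ p in {z : Fin d → ℝ | g z = 0} ×ˢ Set.univ, F₀ p ∂(ν.prod μpr) = 0 := by
      rw [← Measure.prod_restrict, Measure.restrict_univ,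
        lintegral_prod _ hF₀m.aemeasurable]
      have h2 : ∫⁻ z, ∫⁻ ω', F₀ (z, ω') ∂μpr ∂(ν.restrict {z : Fin d → ℝ | g z = 0})
          = ∫⁻ z in {z : Fin d → ℝ | g z = 0}, g z ∂ν := by
        refine lintegral_congr_ae ?_
        filter_upwards [ae_restrict_of_ae hg_ae] with z hz
        exact hz.symm
      rw [h2, setLIntegral_congr_fun hAset (fun z hz => hz), lintegral_zero]
    have h3 := (setLIntegral_eq_zero_iff hS hF₀m).mp hint
    filter_upwards [h3] with p hp h0
    exact hp ⟨h0, trivial⟩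
  have hgtop : ∀ᵐ p ∂(ν.prod μpr), g p.1 ≠ ⊤ := by
    have h0 : ν {z : Fin d → ℝ | g z = ⊤} = 0 := by
      have := Measure.rnDeriv_lt_top μG ν
      rw [ae_iff] at this
      simpa [not_lt, top_le_iff] using this
    rw [ae_iff]
    refine measure_mono_null (fun p hp =>
      (Set.mk_mem_prod (not_not.mp hp) trivial :
        p ∈ {z : Fin d → ℝ | g z = ⊤} ×ˢ Set.univ)) ?_
    rw [Measure.prod_prod, h0, zero_mul]
  -- R equals the with-density measure (extensionality from rectangles)
  have hRD : R = (ν.prod μpr).withDensity F₀ := by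
    refine ext_of_generate_finite _ generateFrom_prod.symm isPiSystem_prod ?_ ?_
    · rintro _ ⟨A, hA, B, hB, rfl⟩
      exact hrect A B hA hB
    · have h := hrect Set.univ Set.univ MeasurableSet.univ MeasurableSet.univ
      simpa [Set.univ_prod_univ] using h
  -- the density of R with respect to Q
  set ρ : (Fin d → ℝ) × Ω' → ℝ≥0∞ := fun p => F₀ p / g p.1 with hρ_def
  have hρm : Measurable ρ := hF₀m.div (hgm.comp measurable_fst)
  have hgfst : Measurable (fun p : (Fin d → ℝ) × Ω' => g p.1) := hgm.comp measurable_fst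
  have hmul : (fun p => g p.1 * ρ p) =ᵐ[ν.prod μpr] F₀ := by
    filter_upwards [hnull, hgtop] with p h0 htop
    by_cases hz : g p.1 = 0
    · simp [hρ_def, hz, h0 hz]
    · exact ENNReal.mul_div_cancel hz htop
  have hQR : Q.withDensity ρ = R := by
    rw [hQ_eq, ← withDensity_mul _ hgfst hρm]
    calc (ν.prod μpr).withDensity ((fun p : (Fin d → ℝ) × Ω' => g p.1) * ρ)
        = (ν.prod μpr).withDensity F₀ := withDensity_congr_ae hmul
      _ = R := hRD.symm
  have hRQ : R ≪ Q := hQR ▸ withDensity_absolutelyContinuous Q ρ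
  have hrnR : R.rnDeriv Q =ᵐ[R] ρ := by
    have h := Measure.rnDeriv_withDensity Q hρm
    rw [hQR] at h
    exact hRQ.ae_le h
  -- pull back along ω ↦ (G ω, pr ω)
  have hae_P : ∀ᵐ ω ∂P, R.rnDeriv Q (G ω, pr ω) = ρ (G ω, pr ω) := by
    rw [hR_def] at hrnR
    have h := ae_eq_comp hΦ.aemeasurable hrnR
    exact h
  have hfY : ∀ᵐ ω ∂P, 0 < f (Y ω) ∧ f (Y ω) ≠ ⊤ := by
    have h1 : ∀ᵐ y ∂μY, 0 < f y ∧ f y ≠ ⊤ :=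
      (Measure.rnDeriv_pos hYac).and (hYac.ae_le (Measure.rnDeriv_ne_top μY ν))
    have hset : MeasurableSet {y : Fin d → ℝ | 0 < f y ∧ f y ≠ ⊤} :=
      (measurableSet_lt measurable_const hfm).inter
        (hfm (measurableSet_singleton ⊤)).compl
    rw [hμY_def] at h1
    exact (ae_map_iff hY.aemeasurable hset).mp h1
  have hgG : ∀ᵐ ω ∂P, 0 < g (G ω) ∧ g (G ω) ≠ ⊤ := by
    have h1 : ∀ᵐ z ∂μG, 0 < g z ∧ g z ≠ ⊤ :=
      (Measure.rnDeriv_pos hGac).and (hGac.ae_le (Measure.rnDeriv_ne_top μG ν))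
    have hset : MeasurableSet {z : Fin d → ℝ | 0 < g z ∧ g z ≠ ⊤} :=
      (measurableSet_lt measurable_const hgm).inter
        (hgm (measurableSet_singleton ⊤)).compl
    rw [hμG_def] at h1
    exact (ae_map_iff hGm.aemeasurable hset).mp h1
  -- the log identity
  set Af : Ω → ℝ := fun ω => Real.log ((g (G ω)).toReal) with hAf_def
  set Bf : Ω → ℝ := fun ω => Real.log ((f (Y ω)).toReal) with hBf_def
  have hAfm : Measurable Af := Real.measurable_log.comp ((hgm.comp hGm).ennreal_toReal)
  have hBfm : Measurable Bf := Real.measurable_log.comp ((hfm.comp hY).ennreal_toReal)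
  have hlog : ∀ᵐ ω ∂P, Real.log ((R.rnDeriv Q (G ω, pr ω)).toReal) = Bf ω - Af ω := by
    filter_upwards [hae_P, hfY, hgG] with ω h1 h2 h3
    rw [h1]
    have hF : F₀ (G ω, pr ω) = f (Y ω) := by
      show f (G ω - X (pr ω)) = f (Y ω)
      rw [hsum ω, add_sub_cancel_left]
    show Real.log ((F₀ (G ω, pr ω) / g (G ω)).toReal) = _
    rw [hF, ENNReal.toReal_div,
      Real.log_div (ne_of_gt (ENNReal.toReal_pos (ne_of_gt h2.1) h2.2))
        (ne_of_gt (ENNReal.toReal_pos (ne_of_gt h3.1) h3.2))]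
  -- convert the klDiv integrals to integrals over P
  have hint1 : lintegral R (fun p => ENNReal.ofReal (Real.log ((R.rnDeriv Q p).toReal)))
      = ∫⁻ ω, ENNReal.ofReal (Bf ω - Af ω) ∂P := by
    have hstep : lintegral R (fun p => ENNReal.ofReal (Real.log ((R.rnDeriv Q p).toReal)))
        = ∫⁻ ω, ENNReal.ofReal (Real.log ((R.rnDeriv Q (G ω, pr ω)).toReal)) ∂P := by
      rw [hR_def]
      exact lintegral_map (ENNReal.measurable_ofReal.comp (Real.measurable_log.comp
        (Measure.measurable_rnDeriv _ _).ennreal_toReal)) hΦ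
    rw [hstep]
    refine lintegral_congr_ae ?_
    filter_upwards [hlog] with ω h
    rw [h]
  have hint2 : lintegral R (fun p => ENNReal.ofReal (-Real.log ((R.rnDeriv Q p).toReal)))
      = ∫⁻ ω, ENNReal.ofReal (Af ω - Bf ω) ∂P := by
    have hstep : lintegral R (fun p => ENNReal.ofReal (-Real.log ((R.rnDeriv Q p).toReal)))
        = ∫⁻ ω, ENNReal.ofReal (-Real.log ((R.rnDeriv Q (G ω, pr ω)).toReal)) ∂P := by
      rw [hR_def]
      exact lintegral_map (ENNReal.measurable_ofReal.comp (Real.measurable_log.comp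
        (Measure.measurable_rnDeriv _ _).ennreal_toReal).neg) hΦ
    rw [hstep]
    refine lintegral_congr_ae ?_
    filter_upwards [hlog] with ω h
    rw [h, neg_sub]
  -- entropy conversions
  have hentGpos : entPos μG ν = ∫⁻ ω, ENNReal.ofReal (-Af ω) ∂P := by
    rw [entPos_eq_lintegral μG ν hGac]
    have hstep : ∫⁻ z, ENNReal.ofReal (-Real.log ((μG.rnDeriv ν z).toReal)) ∂μG
        = ∫⁻ ω, ENNReal.ofReal (-Real.log ((μG.rnDeriv ν (G ω)).toReal)) ∂P := by
      rw [hμG_def]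
      exact lintegral_map (ENNReal.measurable_ofReal.comp (Real.measurable_log.comp
        (Measure.measurable_rnDeriv _ _).ennreal_toReal).neg) hGm
    rw [hstep]
  have hentGneg : entNeg μG ν = ∫⁻ ω, ENNReal.ofReal (Af ω) ∂P := by
    rw [entNeg_eq_lintegral μG ν hGac]
    have hstep : ∫⁻ z, ENNReal.ofReal (Real.log ((μG.rnDeriv ν z).toReal)) ∂μG
        = ∫⁻ ω, ENNReal.ofReal (Real.log ((μG.rnDeriv ν (G ω)).toReal)) ∂P := by
      rw [hμG_def]
      exact lintegral_map (ENNReal.measurable_ofReal.comp (Real.measurable_log.comp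
        (Measure.measurable_rnDeriv _ _).ennreal_toReal)) hGm
    rw [hstep]
  have hentYpos : entPos μY ν = ∫⁻ ω, ENNReal.ofReal (-Bf ω) ∂P := by
    rw [entPos_eq_lintegral μY ν hYac]
    have hstep : ∫⁻ z, ENNReal.ofReal (-Real.log ((μY.rnDeriv ν z).toReal)) ∂μY
        = ∫⁻ ω, ENNReal.ofReal (-Real.log ((μY.rnDeriv ν (Y ω)).toReal)) ∂P := by
      rw [hμY_def]
      exact lintegral_map (ENNReal.measurable_ofReal.comp (Real.measurable_log.comp
        (Measure.measurable_rnDeriv _ _).ennreal_toReal).neg) hY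
    rw [hstep]
  have hentYneg : entNeg μY ν = ∫⁻ ω, ENNReal.ofReal (Bf ω) ∂P := by
    rw [entNeg_eq_lintegral μY ν hYac]
    have hstep : ∫⁻ z, ENNReal.ofReal (Real.log ((μY.rnDeriv ν z).toReal)) ∂μY
        = ∫⁻ ω, ENNReal.ofReal (Real.log ((μY.rnDeriv ν (Y ω)).toReal)) ∂P := by
      rw [hμY_def]
      exact lintegral_map (ENNReal.measurable_ofReal.comp (Real.measurable_log.comp
        (Measure.measurable_rnDeriv _ _).ennreal_toReal)) hY
    rw [hstep]
  obtain ⟨hYp, hYn⟩ := hYent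
  simp only [klDiv, diffEntropy]
  rw [if_pos hRQ, hint1, hint2, hentGpos, hentGneg, hentYpos, hentYneg]
  exact lintegral_sub_ereal P hAfm hBfm
    (by rw [← hentYneg]; exact hYn) (by rw [← hentYpos]; exact hYp)
    (by rcases hXYent with h | h
        · exact Or.inl (by rw [← hentGpos]; exact h)
        · exact Or.inr (by rw [← hentGneg]; exact h))

/-- **Lemma 6.1.** If `X` is `𝒜`-measurable and `Y` is independent of `𝒜` with absolutely
continuous law of finite differential entropy, and the law of `X + Y` has well-defined
differential entropy, then `I(X + Y, 𝒜) = h(X + Y) - h(Y)`. -/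
theorem stmt4 {Ω : Type*} {d : ℕ} (𝒜 : MeasurableSpace Ω) [F : MeasurableSpace Ω]
    [StandardBorelSpace Ω] (P : Measure Ω) [IsProbabilityMeasure P] (h𝒜 : 𝒜 ≤ F)
    (X Y : Ω → (Fin d → ℝ)) (hX : @Measurable Ω (Fin d → ℝ) 𝒜 _ X) (hY : Measurable Y)
    (hYindep : ProbabilityTheory.Indep (MeasurableSpace.comap Y inferInstance) 𝒜 P)
    (hYac : Measure.map Y P ≪ volume)
    (hYent : HasFiniteDiffEntropy (Measure.map Y P) volume)
    (hXYent : HasDiffEntropy (Measure.map (fun ω => X ω + Y ω) P) volume) :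
    mutualInfoSigma P (fun ω => X ω + Y ω) 𝒜
      = diffEntropy (Measure.map (fun ω => X ω + Y ω) P) volume
        - diffEntropy (Measure.map Y P) volume := by
  have hXF : Measurable X := hX.mono h𝒜 le_rfl
  have hid : @Measurable Ω Ω F 𝒜 id := fun s hs => h𝒜 s hs
  exact @aux_main Ω Ω d F 𝒜 P inferInstance id hid X hX Y hY
    (fun ω => X ω + Y ω) (fun ω => rfl)
    (by rw [MeasurableSpace.comap_id]; exact hYindep) hYac hYent hXYent
end

section
/- Let (Ω, F, P) be a standard Borel probability space, 𝒜 ⊆ F a sub-σ-algebra, X an ℝ^d-valued 𝒜-measurable random variable, and Y an ℝ^d-valued random variable independent of 𝒜. Then the σ-algebra generated by X + Y and the σ-algebra 𝒜 are conditionally independent given the σ-algebra generated by X. (Conditional independence step in the proof of Lemma 6.1: given X, the random variables X + Y and id_𝒜 are independent.) -/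
open MeasureTheory ProbabilityTheory Real Filter
open scoped ENNReal NNReal

private lemma condIndep_sup_aux {Ω : Type*} {𝒜 mX mY : MeasurableSpace Ω}
    [F : MeasurableSpace Ω] [StandardBorelSpace Ω]
    (P : Measure Ω) [IsProbabilityMeasure P]
    (h𝒜 : 𝒜 ≤ F) (hmX𝒜 : mX ≤ 𝒜) (hmYF : mY ≤ F)
    (hYindep : ProbabilityTheory.Indep mY 𝒜 P) (hmXF : mX ≤ F) :
    ProbabilityTheory.CondIndep mX (mX ⊔ mY) 𝒜 hmXF P := by
  haveI : SigmaFinite (P.trim hmXF) := by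
    have : IsFiniteMeasure (P.trim hmXF) := isFiniteMeasure_trim hmXF
    infer_instance
  -- π-system generating mX ⊔ mY
  set p1 : Set (Set Ω) :=
    {s | ∃ s₁ s₂, MeasurableSet[mX] s₁ ∧ MeasurableSet[mY] s₂ ∧ s = s₁ ∩ s₂} with hp1def
  have hgen : mX ⊔ mY = MeasurableSpace.generateFrom p1 := by
    refine le_antisymm (sup_le ?_ ?_) (MeasurableSpace.generateFrom_le ?_)
    · intro s hs
      exact MeasurableSpace.measurableSet_generateFrom
        ⟨s, Set.univ, hs, MeasurableSet.univ, (Set.inter_univ s).symm⟩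
    · intro s hs
      exact MeasurableSpace.measurableSet_generateFrom
        ⟨Set.univ, s, MeasurableSet.univ, hs, (Set.univ_inter s).symm⟩
    · rintro s ⟨s₁, s₂, hs₁, hs₂, rfl⟩
      exact MeasurableSet.inter ((le_sup_left : mX ≤ mX ⊔ mY) _ hs₁)
        ((le_sup_right : mY ≤ mX ⊔ mY) _ hs₂)
  have hpi : IsPiSystem p1 := by
    rintro s ⟨s₁, s₂, hs₁, hs₂, rfl⟩ t ⟨t₁, t₂, ht₁, ht₂, rfl⟩ -
    exact ⟨s₁ ∩ t₁, s₂ ∩ t₂, hs₁.inter ht₁, hs₂.inter ht₂, by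
      rw [Set.inter_inter_inter_comm]⟩
  have h𝒜gen : 𝒜 = MeasurableSpace.generateFrom {s | MeasurableSet[𝒜] s} :=
    (@MeasurableSpace.generateFrom_measurableSet Ω 𝒜).symm
  refine ProbabilityTheory.CondIndepSets.condIndep (sup_le hmXF hmYF) h𝒜 hpi
    (@MeasurableSpace.isPiSystem_measurableSet Ω 𝒜) hgen h𝒜gen ?_
  have hmeas1 : ∀ s ∈ p1, MeasurableSet[F] s := by
    rintro s ⟨s₁, s₂, hs₁, hs₂, rfl⟩
    exact (hmXF _ hs₁).inter (hmYF _ hs₂)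
  have hmeas2 : ∀ s ∈ {s | MeasurableSet[𝒜] s}, MeasurableSet[F] s := fun t ht => h𝒜 _ ht
  refine (ProbabilityTheory.condIndepSets_iff mX hmXF p1 {s | MeasurableSet[𝒜] s}
    hmeas1 hmeas2 P).mpr ?_
  rintro s t ⟨s₁, s₂, hs₁, hs₂, rfl⟩ ht
  -- Measurability in F
  have hs₁F : MeasurableSet[F] s₁ := hmXF _ hs₁
  have hs₂F : MeasurableSet[F] s₂ := hmYF _ hs₂
  have htF : MeasurableSet[F] t := h𝒜 _ ht
  set c : ℝ := (P s₂).toReal with hcdef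
  -- independence of s₂ from sets in 𝒜
  have hindep' : ∀ u : Set Ω, MeasurableSet[𝒜] u → P (s₂ ∩ u) = P s₂ * P u := by
    intro u hu
    exact (ProbabilityTheory.Indep_iff _ _ _).mp hYindep s₂ u hs₂ hu
  -- key step: P⟦s₂ ∩ t | mX⟧ = c • P⟦t | mX⟧
  have hb : P[Set.indicator (s₂ ∩ t) (fun _ => (1 : ℝ)) | mX]
      =ᵐ[P] fun ω => c * (P[Set.indicator t (fun _ => (1 : ℝ)) | mX]) ω := by
    have hint : Integrable (Set.indicator (s₂ ∩ t) (fun _ => (1 : ℝ))) P :=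
      (integrable_const (1 : ℝ)).indicator (hs₂F.inter htF)
    have hintt : Integrable (Set.indicator t (fun _ => (1 : ℝ))) P :=
      (integrable_const (1 : ℝ)).indicator htF
    refine (ae_eq_condExp_of_forall_setIntegral_eq hmXF hint ?_ ?_ ?_).symm
    · intro A hA hAfin
      exact ((integrable_condExp.const_mul c)).integrableOn
    · intro A hA hAfin
      have hAF : MeasurableSet[F] A := hmXF _ hA
      have h1 : ∫ x in A, c * (P[Set.indicator t (fun _ => (1 : ℝ)) | mX]) x ∂P
          = c * ∫ x in A, (P[Set.indicator t (fun _ => (1 : ℝ)) | mX]) x ∂P := by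
        exact integral_const_mul c _
      have h2 : ∫ x in A, (P[Set.indicator t (fun _ => (1 : ℝ)) | mX]) x ∂P
          = ∫ x in A, Set.indicator t (fun _ => (1 : ℝ)) x ∂P :=
        setIntegral_condExp hmXF hintt hA
      have h3 : ∫ x in A, Set.indicator t (fun _ => (1 : ℝ)) x ∂P
          = (P (t ∩ A)).toReal := by
        rw [setIntegral_indicator htF, setIntegral_const, smul_eq_mul, mul_one,
          Set.inter_comm, measureReal_def]
      have h4 : ∫ x in A, Set.indicator (s₂ ∩ t) (fun _ => (1 : ℝ)) x ∂P
          = (P (s₂ ∩ t ∩ A)).toReal := by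
        rw [setIntegral_indicator (hs₂F.inter htF), setIntegral_const, smul_eq_mul, mul_one,
          Set.inter_comm, measureReal_def]
      rw [h1, h2, h3, h4, Set.inter_assoc,
        hindep' (t ∩ A) (ht.inter (hmX𝒜 _ hA)), ENNReal.toReal_mul]
    · exact StronglyMeasurable.aestronglyMeasurable (stronglyMeasurable_condExp.const_mul c)
  -- P⟦s₂ | mX⟧ = c (constant), by independence of mY and mX
  have hYX : ProbabilityTheory.Indep mY mX P :=
    ProbabilityTheory.indep_of_indep_of_le_right hYindep hmX𝒜
  have hc : P[Set.indicator s₂ (fun _ => (1 : ℝ)) | mX] =ᵐ[P] fun _ => c := by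
    have hsm : StronglyMeasurable[mY] (Set.indicator s₂ (fun _ => (1 : ℝ))) :=
      (stronglyMeasurable_const (β := ℝ)).indicator hs₂
    have := condExp_indep_eq hmYF hmXF hsm hYX
    refine this.trans ?_
    refine Filter.Eventually.of_forall fun ω => ?_
    rw [hcdef, ← measureReal_def, ← integral_indicator_one hs₂F]
    rfl
  -- assemble
  have ha : P[Set.indicator ((s₁ ∩ s₂) ∩ t) (fun _ => (1 : ℝ)) | mX]
      =ᵐ[P] Set.indicator s₁ (P[Set.indicator (s₂ ∩ t) (fun _ => (1 : ℝ)) | mX]) := by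
    have heq : Set.indicator ((s₁ ∩ s₂) ∩ t) (fun _ => (1 : ℝ))
        = Set.indicator s₁ (Set.indicator (s₂ ∩ t) (fun _ => (1 : ℝ))) := by
      rw [Set.indicator_indicator, Set.inter_assoc]
    rw [heq]
    exact condExp_indicator ((integrable_const (1 : ℝ)).indicator (hs₂F.inter htF)) hs₁
  have ha2 : P[Set.indicator (s₁ ∩ s₂) (fun _ => (1 : ℝ)) | mX]
      =ᵐ[P] Set.indicator s₁ (P[Set.indicator s₂ (fun _ => (1 : ℝ)) | mX]) := by
    have heq : Set.indicator (s₁ ∩ s₂) (fun _ => (1 : ℝ))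
        = Set.indicator s₁ (Set.indicator s₂ (fun _ => (1 : ℝ))) := by
      rw [Set.indicator_indicator]
    rw [heq]
    exact condExp_indicator ((integrable_const (1 : ℝ)).indicator hs₂F) hs₁
  calc P[Set.indicator ((s₁ ∩ s₂) ∩ t) (fun _ => (1 : ℝ)) | mX]
      =ᵐ[P] Set.indicator s₁ (P[Set.indicator (s₂ ∩ t) (fun _ => (1 : ℝ)) | mX]) := ha
    _ =ᵐ[P] Set.indicator s₁ (fun ω => c * (P[Set.indicator t (fun _ => (1 : ℝ)) | mX]) ω) := by
        filter_upwards [hb] with ω hω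
        by_cases hωs : ω ∈ s₁
        · simp only [Set.indicator_of_mem hωs, hω]
        · simp only [Set.indicator_of_notMem hωs]
    _ =ᵐ[P] (P[Set.indicator (s₁ ∩ s₂) (fun _ => (1 : ℝ)) | mX])
          * (P[Set.indicator t (fun _ => (1 : ℝ)) | mX]) := by
        filter_upwards [ha2, hc] with ω hω2 hωc
        simp only [Pi.mul_apply, hω2]
        by_cases hωs : ω ∈ s₁
        · simp only [Set.indicator_of_mem hωs, hωc]
        · simp only [Set.indicator_of_notMem hωs, zero_mul]

/-- **Conditional independence step in the proof of Lemma 6.1.** If `X` is `𝒜`-measurable and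
`Y` is independent of `𝒜`, then `σ(X + Y)` and `𝒜` are conditionally independent given
`σ(X)`. -/
theorem stmt9 {Ω : Type*} {d : ℕ} (𝒜 : MeasurableSpace Ω) [F : MeasurableSpace Ω]
    [StandardBorelSpace Ω] (P : Measure Ω) [IsProbabilityMeasure P] (h𝒜 : 𝒜 ≤ F)
    (X Y : Ω → (Fin d → ℝ)) (hX : @Measurable Ω (Fin d → ℝ) 𝒜 _ X) (hY : Measurable Y)
    (hYindep : ProbabilityTheory.Indep (MeasurableSpace.comap Y inferInstance) 𝒜 P) :
    ProbabilityTheory.CondIndep (MeasurableSpace.comap X inferInstance)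
      (MeasurableSpace.comap (fun ω => X ω + Y ω) inferInstance) 𝒜
      (measurable_iff_comap_le.mp (hX.mono h𝒜 le_rfl)) P := by
  have hmX𝒜 : MeasurableSpace.comap X (inferInstance : MeasurableSpace (Fin d → ℝ)) ≤ 𝒜 :=
    measurable_iff_comap_le.mp hX
  have hle : MeasurableSpace.comap (fun ω => X ω + Y ω)
      (inferInstance : MeasurableSpace (Fin d → ℝ)) ≤
      MeasurableSpace.comap X (inferInstance : MeasurableSpace (Fin d → ℝ)) ⊔
      MeasurableSpace.comap Y (inferInstance : MeasurableSpace (Fin d → ℝ)) := by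
    rw [← measurable_iff_comap_le]
    exact Measurable.add (measurable_iff_comap_le.mpr le_sup_left)
      (measurable_iff_comap_le.mpr le_sup_right)
  exact ProbabilityTheory.condIndep_of_condIndep_of_le_left
    (condIndep_sup_aux P h𝒜 hmX𝒜 (measurable_iff_comap_le.mp hY) hYindep _) hle
end
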